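/- arXiv:2601.02258 — 2 statements merged into one kernel-verified Lean document; each statement's English description precedes it below -/
import Mathlib

section
/- Let R be a commutative ring, W an R-module, q ∈ R, F an automorphism and N an endomorphism of W with N ∘ F = q·(F ∘ N). If both (F − 1) and (qF − 1) are invertible endomorphisms of W, then the complex W →^{d₀} W ⊕ W →^{d₁} W with d₀(w) = ((F − 1)w, Nw) and d₁(a,b) = Na + (1 − qF)b is exact everywhere: d₀ is injective, ker d₁ = im d₀, and d₁ is surjective. -/
/-! Since `N ∘ F = q • (F ∘ N)`, the endomorphism `N` intertwines `F - 1` with `qF - 1`. Hence a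
cocycle `(a, b)` is the coboundary of the `(F - 1)`-preimage `w` of `a`: both `Nw` and `b` are
`(qF - 1)`-preimages of `Na`. -/

/-- First differential `w ↦ ((F - 1)w, Nw)` of the Weil–Deligne complex. -/
noncomputable def wdD0 {R W : Type*} [CommRing R] [AddCommGroup W] [Module R W]
    (F N : W →ₗ[R] W) : W →ₗ[R] W × W :=
  (F - LinearMap.id).prod N

/-- Second differential `(a, b) ↦ Na + (1 - qF)b` of the Weil–Deligne complex. -/
noncomputable def wdD1 {R W : Type*} [CommRing R] [AddCommGroup W] [Module R W]
    (q : R) (F N : W →ₗ[R] W) : W × W →ₗ[R] W :=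
  N ∘ₗ LinearMap.fst R W W + (LinearMap.id - q • F) ∘ₗ LinearMap.snd R W W

section WeilDeligneComplex

variable {R W : Type*} [CommRing R] [AddCommGroup W] [Module R W] {q : R} {F N : W →ₗ[R] W}

theorem smul_sub_id_comp_eq_comp_sub_id (h : N ∘ₗ F = q • (F ∘ₗ N)) :
    (q • F - LinearMap.id) ∘ₗ N = N ∘ₗ (F - LinearMap.id) := by
  rw [LinearMap.sub_comp, LinearMap.comp_sub, LinearMap.smul_comp, h, LinearMap.id_comp,
    LinearMap.comp_id]

theorem wdD0_apply (w : W) : wdD0 F N w = ((F - LinearMap.id : W →ₗ[R] W) w, N w) := rfl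

theorem wdD1_apply (a b : W) :
    wdD1 q F N (a, b) = N a - (q • F - LinearMap.id : W →ₗ[R] W) b := by
  simp only [wdD1, LinearMap.add_apply, LinearMap.comp_apply, LinearMap.fst_apply,
    LinearMap.snd_apply, LinearMap.sub_apply, LinearMap.smul_apply, LinearMap.id_apply]
  abel

theorem wdD1_comp_wdD0 (h : N ∘ₗ F = q • (F ∘ₗ N)) : wdD1 q F N ∘ₗ wdD0 F N = 0 := by
  ext w
  rw [LinearMap.comp_apply, wdD0_apply, wdD1_apply,
    ← LinearMap.comp_apply, ← LinearMap.comp_apply (q • F - _),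
    smul_sub_id_comp_eq_comp_sub_id h, sub_self, LinearMap.zero_apply]

theorem injective_wdD0 (hF1 : Function.Injective (F - LinearMap.id : W →ₗ[R] W)) :
    Function.Injective (wdD0 F N) :=
  fun _ _ hxy ↦ hF1 (congrArg Prod.fst hxy)

theorem surjective_wdD1 (hqF1 : Function.Surjective (q • F - LinearMap.id : W →ₗ[R] W)) :
    Function.Surjective (wdD1 q F N) := by
  intro w
  obtain ⟨b, hb⟩ := hqF1 (-w)
  exact ⟨(0, b), by rw [wdD1_apply, hb, map_zero, zero_sub, neg_neg]⟩

theorem ker_wdD1_le_range_wdD0 (h : N ∘ₗ F = q • (F ∘ₗ N))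
    (hF1 : Function.Surjective (F - LinearMap.id : W →ₗ[R] W))
    (hqF1 : Function.Injective (q • F - LinearMap.id : W →ₗ[R] W)) :
    LinearMap.ker (wdD1 q F N) ≤ LinearMap.range (wdD0 F N) := by
  rintro ⟨a, b⟩ hab
  rw [LinearMap.mem_ker, wdD1_apply, sub_eq_zero] at hab
  obtain ⟨w, hw⟩ := hF1 a
  have hNw : N w = b := hqF1 <| by
    rw [← hab, ← hw, ← LinearMap.comp_apply, smul_sub_id_comp_eq_comp_sub_id h,
      LinearMap.comp_apply]
  exact ⟨w, by rw [wdD0_apply, hw, hNw]⟩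

end WeilDeligneComplex

/-- If `F - 1` and `qF - 1` are invertible endomorphisms of `W`, then the
Weil–Deligne complex `W → W ⊕ W → W` is exact everywhere: `d₀` is injective,
`ker d₁ = im d₀`, and `d₁` is surjective. -/
theorem stmt5 (R W : Type*) [CommRing R] [AddCommGroup W] [Module R W] (q : R)
    (F : W ≃ₗ[R] W) (N : W →ₗ[R] W)
    (h : N ∘ₗ (F : W →ₗ[R] W) = q • ((F : W →ₗ[R] W) ∘ₗ N))
    (hF1 : Function.Bijective ((F : W →ₗ[R] W) - (LinearMap.id : W →ₗ[R] W)))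
    (hqF1 : Function.Bijective (q • (F : W →ₗ[R] W) - (LinearMap.id : W →ₗ[R] W))) :
    Function.Injective (wdD0 (F : W →ₗ[R] W) N) ∧
    LinearMap.ker (wdD1 q (F : W →ₗ[R] W) N)
      = LinearMap.range (wdD0 (F : W →ₗ[R] W) N) ∧
    Function.Surjective (wdD1 q (F : W →ₗ[R] W) N) :=
  ⟨injective_wdD0 hF1.injective,
    le_antisymm (ker_wdD1_le_range_wdD0 h hF1.surjective hqF1.injective)
      (LinearMap.range_le_ker_iff.mpr (wdD1_comp_wdD0 h)),
    surjective_wdD1 hqF1.surjective⟩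
end

section
/- Let (A, |·|_A) be a commutative ring equipped with a submultiplicative seminorm. Define the Berkovich spectrum M(A) as the set of all functions x : A → ℝ≥0 that are multiplicative seminorms (x(0)=0, x(1)=1 unless A=0, x(ab)=x(a)x(b), x(a+b) ≤ x(a)+x(b)) and bounded (x(a) ≤ |a|_A for all a ∈ A), endowed with the topology of pointwise convergence. Then M(A) is a compact Hausdorff topological space. -/
/-- The Berkovich spectrum of a seminormed commutative ring `(A, nA)`: the set
of bounded multiplicative seminorms on `A`, with the topology of pointwise
convergence (induced from the product topology on `A → ℝ≥0`). -/
def BerkovichSpectrum (A : Type*) [CommRing A] (nA : A → NNReal) : Type _ :=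
  {x : A → NNReal //
    x 0 = 0 ∧ (x 1 = 1 ∨ Subsingleton A) ∧
    (∀ a b : A, x (a * b) = x a * x b) ∧
    (∀ a b : A, x (a + b) ≤ x a + x b) ∧
    (∀ a : A, x a ≤ nA a)}

instance (A : Type*) [CommRing A] (nA : A → NNReal) :
    TopologicalSpace (BerkovichSpectrum A nA) :=
  instTopologicalSpaceSubtype

/-! Pointwise boundedness `x ≤ |·|_A` puts `M(A)` inside the order interval `[0, |·|_A]` of
`A → ℝ≥0`, which is compact by Tychonoff; each defining condition of `M(A)` is a closed condition
on finitely many coordinates, so `M(A)` is closed in it, hence compact. It is Hausdorff as a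
subspace of a product of Hausdorff spaces. -/

namespace BerkovichSpectrum

variable (A : Type*) [CommRing A] (nA : A → NNReal)

def carrier : Set (A → NNReal) :=
  {x | x 0 = 0 ∧ (x 1 = 1 ∨ Subsingleton A) ∧
    (∀ a b : A, x (a * b) = x a * x b) ∧
    (∀ a b : A, x (a + b) ≤ x a + x b) ∧
    (∀ a : A, x a ≤ nA a)}

theorem isClosed_carrier : IsClosed (carrier A nA) := by
  have hone : IsClosed {x : A → NNReal | x 1 = 1 ∨ Subsingleton A} := by
    by_cases h : Subsingleton A
    · simp [h]
    · simpa [h] using isClosed_eq (continuous_apply (1 : A)) continuous_const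
  simp only [carrier, Set.ofPred_and, Set.ofPred_forall]
  refine (isClosed_eq (continuous_apply 0) continuous_const).inter
    (hone.inter ((isClosed_iInter fun a => isClosed_iInter fun b => ?_).inter
      ((isClosed_iInter fun a => isClosed_iInter fun b => ?_).inter
        (isClosed_iInter fun a => isClosed_le (continuous_apply a) continuous_const))))
  · exact isClosed_eq (continuous_apply _) ((continuous_apply a).mul (continuous_apply b))
  · exact isClosed_le (continuous_apply _) ((continuous_apply a).add (continuous_apply b))

theorem carrier_subset_Icc : carrier A nA ⊆ Set.Icc 0 nA :=
  fun _ hx => ⟨zero_le, hx.2.2.2.2⟩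

theorem isCompact_carrier : IsCompact (carrier A nA) :=
  isCompact_Icc.of_isClosed_subset (isClosed_carrier A nA) (carrier_subset_Icc A nA)

end BerkovichSpectrum

theorem stmt13_general (A : Type*) [CommRing A] (nA : A → NNReal) :
    CompactSpace (BerkovichSpectrum A nA) ∧ T2Space (BerkovichSpectrum A nA) :=
  ⟨isCompact_iff_compactSpace.mp (BerkovichSpectrum.isCompact_carrier A nA),
    inferInstanceAs (T2Space (BerkovichSpectrum.carrier A nA))⟩

/-- Let `(A, |·|_A)` be a commutative ring with a submultiplicative seminorm.
Then the Berkovich spectrum `M(A)`, the space of bounded multiplicative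
seminorms on `A` with the topology of pointwise convergence, is a compact
Hausdorff topological space. -/
theorem stmt13 (A : Type*) [CommRing A] (nA : A → NNReal)
    (h0 : nA 0 = 0) (hadd : ∀ a b : A, nA (a + b) ≤ nA a + nA b)
    (hmul : ∀ a b : A, nA (a * b) ≤ nA a * nA b) :
    CompactSpace (BerkovichSpectrum A nA) ∧ T2Space (BerkovichSpectrum A nA) :=
  stmt13_general A nA
end
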